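/- The graph G2 (as in the previous context) is not (1,2,2,2,3)-packing edge-colorable: there is no partition of E(G2) into a matching E_1, three induced matchings E_2,E_3,E_4, and a class E_5 in which any two distinct edges are at edge-distance at least 4 (closest endpoints at vertex-distance ≥ 3). -/

import Mathlib

open SimpleGraph

/-- The distance between two edges: the minimum, over endpoints `a` of `e` and `b` of `f`,
of the vertex distance between `a` and `b` (as an extended natural number,
`⊤` when no endpoints are connected). -/
noncomputable def edgeDist {V : Type*} (G : SimpleGraph V) (e f : Sym2 V) : ℕ∞ :=
  sInf {d : ℕ∞ | ∃ a ∈ e, ∃ b ∈ f, G.edist a b = d}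

/-- An `S`-packing edge-coloring (in the closest-endpoint vertex-distance convention):
a map `c` assigning to each edge a color `i : Fin k` such that any two distinct
same-colored edges are at edge-distance at least `S i`.  A class with `S i = 1` is a
matching, `S i = 2` an induced matching, etc. -/
def IsPackingEdgeColoring {V : Type*} (G : SimpleGraph V) {k : ℕ} (S : Fin k → ℕ)
    (c : Sym2 V → Fin k) : Prop :=
  ∀ e ∈ G.edgeSet, ∀ f ∈ G.edgeSet, e ≠ f → c e = c f →
    (S (c e) : ℕ∞) ≤ edgeDist G e f

/-- The graph $G_2$ (vertex $u_{i+1}$ = `i : Fin 8`). -/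
def G2 : SimpleGraph (Fin 8) :=
  SimpleGraph.fromRel (fun a b =>
    (a, b) ∈ ([(0,1),(0,2),(1,2),(1,3),(2,4),(3,4),(3,5),(4,6),(5,6),(5,7),(6,7)] :
      List (Fin 8 × Fin 8)))

instance : DecidableRel G2.Adj := fun a b =>
  decidable_of_iff' _ (SimpleGraph.fromRel_adj _ a b)

def sN (x : ℕ) : ℕ := if x = 0 then 1 else if x = 4 then 3 else 2

def consTab : List (List (ℕ × ℕ)) := [[], [(0,0)], [(0,0), (1,0)], [(0,0), (1,1), (2,0)], [(0,1), (1,0), (2,0), (3,1)], [(0,1), (1,1), (2,1), (3,0), (4,0)], [(0,1), (1,2), (2,1), (3,0), (4,1), (5,0)], [(0,2), (1,1), (2,1), (3,1), (4,0), (5,0), (6,1)], [(0,2), (1,2), (2,2), (3,1), (4,1), (5,1), (6,0), (7,0)], [(0,2), (2,2), (3,1), (4,2), (5,1), (6,0), (7,1), (8,0)], [(1,2), (2,2), (3,2), (4,1), (5,1), (6,1), (7,0), (8,0), (9,0)]]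

def consAt (p : ℕ) : List (ℕ × ℕ) := consTab.getD p []

def step (xs : List ℕ) (x p : ℕ) : Bool :=
  (consAt p).all fun t =>
    match xs[p - 1 - t.1]? with
    | some y => !(x == y) || decide (sN x ≤ t.2)
    | none => true

def search : ℕ → ℕ → List ℕ → Bool
  | 0, _, _ => true
  | n+1, p, xs => [0,1,2,3,4].any fun x => step xs x p && search n (p+1) (x :: xs)

def E : ℕ → Sym2 (Fin 8) := fun n => ([s(0,1), s(0,2), s(1,2), s(1,3), s(2,4), s(3,4), s(3,5), s(4,6), s(5,6), s(5,7), s(6,7)] : List (Sym2 (Fin 8))).getD n s(0,1)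

lemma step_true (xs : List ℕ) (x p : ℕ)
    (h : ∀ t ∈ consAt p, ∀ y, xs[p - 1 - t.1]? = some y → x ≠ y ∨ sN x ≤ t.2) :
    step xs x p = true := by
  rw [step, List.all_eq_true]
  intro t ht
  rcases hg : xs[p - 1 - t.1]? with _ | y
  · rfl
  · rcases h t ht y hg with h' | h' <;> simp [h']

lemma edgeDist_le_edist {V : Type*} (G : SimpleGraph V) {e f : Sym2 V} {a b : V}
    (ha : a ∈ e) (hb : b ∈ f) : edgeDist G e f ≤ G.edist a b :=
  sInf_le ⟨a, ha, b, hb, rfl⟩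

lemma bd0 {e f : Sym2 (Fin 8)} {a : Fin 8} (ha : a ∈ e) (hb : a ∈ f) :
    edgeDist G2 e f ≤ ((0:ℕ) : ℕ∞) := by
  simpa [edist_self] using edgeDist_le_edist G2 ha hb

lemma bd1 {e f : Sym2 (Fin 8)} {a b : Fin 8} (ha : a ∈ e) (hb : b ∈ f) (hab : G2.Adj a b) :
    edgeDist G2 e f ≤ ((1:ℕ) : ℕ∞) := by
  refine (edgeDist_le_edist G2 ha hb).trans ?_
  rw [edist_eq_one_iff_adj.mpr hab]; norm_num

lemma bd2 {e f : Sym2 (Fin 8)} {a b : Fin 8} (m : Fin 8) (ha : a ∈ e) (hb : b ∈ f)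
    (h1 : G2.Adj a m) (h2 : G2.Adj m b) :
    edgeDist G2 e f ≤ ((2:ℕ) : ℕ∞) := by
  refine (edgeDist_le_edist G2 ha hb).trans ((SimpleGraph.edist_triangle (v := m)).trans ?_)
  rw [edist_eq_one_iff_adj.mpr h1, edist_eq_one_iff_adj.mpr h2]
  norm_num

lemma memE : ∀ i < 11, E i ∈ G2.edgeSet := by
  intro i hi
  interval_cases i <;> exact G2.mem_edgeSet.mpr (by decide)

lemma key (c : Sym2 (Fin 8) → Fin 5) (hc : IsPackingEdgeColoring G2 ![1,2,2,2,3] c)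
    (i j d : ℕ) (hi : E i ∈ G2.edgeSet) (hj : E j ∈ G2.edgeSet) (hne : E j ≠ E i)
    (bd : edgeDist G2 (E j) (E i) ≤ (d : ℕ∞)) (h : (c (E j)).val = (c (E i)).val) :
    sN (c (E j)).val ≤ d := by
  have h' : c (E j) = c (E i) := Fin.val_injective h
  have h2 := (hc (E j) hj (E i) hi hne h').trans bd
  have h3 : sN ((c (E j)).val) = ![1,2,2,2,3] (c (E j)) := by
    have h4 : ∀ a : Fin 5, sN a.val = ![1,2,2,2,3] a := by decide
    exact h4 _
  rw [h3]
  exact_mod_cast h2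

lemma search_complete (v : ℕ → ℕ) (hv5 : ∀ p, v p < 5)
    (hstep : ∀ p, step (((List.range p).map v).reverse) (v p) p = true) :
    ∀ n p, search n p (((List.range p).map v).reverse) = true := by
  intro n
  induction n with
  | zero => intro p; rfl
  | succ n ih =>
    intro p
    have heq : search (n+1) p (((List.range p).map v).reverse) =
        [0,1,2,3,4].any fun x => step (((List.range p).map v).reverse) x p &&
          search n (p+1) (x :: ((List.range p).map v).reverse) := by
      simp [search]
    rw [heq, List.any_eq_true]
    refine ⟨v p, by have := hv5 p; simp; omega, ?_⟩
    rw [Bool.and_eq_true]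
    refine ⟨hstep p, ?_⟩
    have hxs : v p :: ((List.range p).map v).reverse = ((List.range (p+1)).map v).reverse := by
      simp [List.range_succ]
    rw [hxs]
    exact ih (p+1)

set_option maxHeartbeats 2000000 in
/-- $G_2$ is not $(1,2^3,3)$-packing edge-colorable. -/
theorem stmt7 : ¬ ∃ c : Sym2 (Fin 8) → Fin 5,
    IsPackingEdgeColoring G2 ![1,2,2,2,3] c := by
  rintro ⟨c, hc⟩
  set v : ℕ → ℕ := fun n => (c (E n)).val with hv
  have hv5 : ∀ p, v p < 5 := fun p => (c (E p)).isLt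
  have hstep : ∀ p, step (((List.range p).map v).reverse) (v p) p = true := by
    intro p
    by_cases hp : p < 11
    swap
    · apply step_true
      intro t ht y hg
      rw [show consAt p = [] from List.getD_eq_default _ _ (by rw [show consTab.length = 11 from rfl]; omega)] at ht
      exact absurd ht List.not_mem_nil
    interval_cases p
    · rfl
    · -- p = 1
      apply step_true
      intro t ht y hg
      rw [show consAt 1 = consTab.getD 1 [] from rfl] at ht
      rw [show ((List.range 1).map v).reverse = [v 0] from by simp [List.range_succ]] at hg
      fin_cases ht
      · obtain rfl : v 0 = y := Option.some.inj hg
        by_cases hvv : v 1 = v 0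
        · exact Or.inr (key c hc 0 1 0 (memE 0 (by norm_num)) (memE 1 (by norm_num)) (by decide) (bd0 (show (0:Fin 8) ∈ E 1 by decide) (show (0:Fin 8) ∈ E 0 by decide)) hvv)
        · exact Or.inl hvv
    · -- p = 2
      apply step_true
      intro t ht y hg
      rw [show consAt 2 = consTab.getD 2 [] from rfl] at ht
      rw [show ((List.range 2).map v).reverse = [v 1, v 0] from by simp [List.range_succ]] at hg
      fin_cases ht
      · obtain rfl : v 0 = y := Option.some.inj hg
        by_cases hvv : v 2 = v 0
        · exact Or.inr (key c hc 0 2 0 (memE 0 (by norm_num)) (memE 2 (by norm_num)) (by decide) (bd0 (show (1:Fin 8) ∈ E 2 by decide) (show (1:Fin 8) ∈ E 0 by decide)) hvv)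
        · exact Or.inl hvv
      · obtain rfl : v 1 = y := Option.some.inj hg
        by_cases hvv : v 2 = v 1
        · exact Or.inr (key c hc 1 2 0 (memE 1 (by norm_num)) (memE 2 (by norm_num)) (by decide) (bd0 (show (2:Fin 8) ∈ E 2 by decide) (show (2:Fin 8) ∈ E 1 by decide)) hvv)
        · exact Or.inl hvv
    · -- p = 3
      apply step_true
      intro t ht y hg
      rw [show consAt 3 = consTab.getD 3 [] from rfl] at ht
      rw [show ((List.range 3).map v).reverse = [v 2, v 1, v 0] from by simp [List.range_succ]] at hg
      fin_cases ht
      · obtain rfl : v 0 = y := Option.some.inj hg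
        by_cases hvv : v 3 = v 0
        · exact Or.inr (key c hc 0 3 0 (memE 0 (by norm_num)) (memE 3 (by norm_num)) (by decide) (bd0 (show (1:Fin 8) ∈ E 3 by decide) (show (1:Fin 8) ∈ E 0 by decide)) hvv)
        · exact Or.inl hvv
      · obtain rfl : v 1 = y := Option.some.inj hg
        by_cases hvv : v 3 = v 1
        · exact Or.inr (key c hc 1 3 1 (memE 1 (by norm_num)) (memE 3 (by norm_num)) (by decide) (bd1 (show (1:Fin 8) ∈ E 3 by decide) (show (0:Fin 8) ∈ E 1 by decide) (by decide)) hvv)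
        · exact Or.inl hvv
      · obtain rfl : v 2 = y := Option.some.inj hg
        by_cases hvv : v 3 = v 2
        · exact Or.inr (key c hc 2 3 0 (memE 2 (by norm_num)) (memE 3 (by norm_num)) (by decide) (bd0 (show (1:Fin 8) ∈ E 3 by decide) (show (1:Fin 8) ∈ E 2 by decide)) hvv)
        · exact Or.inl hvv
    · -- p = 4
      apply step_true
      intro t ht y hg
      rw [show consAt 4 = consTab.getD 4 [] from rfl] at ht
      rw [show ((List.range 4).map v).reverse = [v 3, v 2, v 1, v 0] from by simp [List.range_succ]] at hg
      fin_cases ht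
      · obtain rfl : v 0 = y := Option.some.inj hg
        by_cases hvv : v 4 = v 0
        · exact Or.inr (key c hc 0 4 1 (memE 0 (by norm_num)) (memE 4 (by norm_num)) (by decide) (bd1 (show (2:Fin 8) ∈ E 4 by decide) (show (0:Fin 8) ∈ E 0 by decide) (by decide)) hvv)
        · exact Or.inl hvv
      · obtain rfl : v 1 = y := Option.some.inj hg
        by_cases hvv : v 4 = v 1
        · exact Or.inr (key c hc 1 4 0 (memE 1 (by norm_num)) (memE 4 (by norm_num)) (by decide) (bd0 (show (2:Fin 8) ∈ E 4 by decide) (show (2:Fin 8) ∈ E 1 by decide)) hvv)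
        · exact Or.inl hvv
      · obtain rfl : v 2 = y := Option.some.inj hg
        by_cases hvv : v 4 = v 2
        · exact Or.inr (key c hc 2 4 0 (memE 2 (by norm_num)) (memE 4 (by norm_num)) (by decide) (bd0 (show (2:Fin 8) ∈ E 4 by decide) (show (2:Fin 8) ∈ E 2 by decide)) hvv)
        · exact Or.inl hvv
      · obtain rfl : v 3 = y := Option.some.inj hg
        by_cases hvv : v 4 = v 3
        · exact Or.inr (key c hc 3 4 1 (memE 3 (by norm_num)) (memE 4 (by norm_num)) (by decide) (bd1 (show (2:Fin 8) ∈ E 4 by decide) (show (1:Fin 8) ∈ E 3 by decide) (by decide)) hvv)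
        · exact Or.inl hvv
    · -- p = 5
      apply step_true
      intro t ht y hg
      rw [show consAt 5 = consTab.getD 5 [] from rfl] at ht
      rw [show ((List.range 5).map v).reverse = [v 4, v 3, v 2, v 1, v 0] from by simp [List.range_succ]] at hg
      fin_cases ht
      · obtain rfl : v 0 = y := Option.some.inj hg
        by_cases hvv : v 5 = v 0
        · exact Or.inr (key c hc 0 5 1 (memE 0 (by norm_num)) (memE 5 (by norm_num)) (by decide) (bd1 (show (3:Fin 8) ∈ E 5 by decide) (show (1:Fin 8) ∈ E 0 by decide) (by decide)) hvv)
        · exact Or.inl hvv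
      · obtain rfl : v 1 = y := Option.some.inj hg
        by_cases hvv : v 5 = v 1
        · exact Or.inr (key c hc 1 5 1 (memE 1 (by norm_num)) (memE 5 (by norm_num)) (by decide) (bd1 (show (4:Fin 8) ∈ E 5 by decide) (show (2:Fin 8) ∈ E 1 by decide) (by decide)) hvv)
        · exact Or.inl hvv
      · obtain rfl : v 2 = y := Option.some.inj hg
        by_cases hvv : v 5 = v 2
        · exact Or.inr (key c hc 2 5 1 (memE 2 (by norm_num)) (memE 5 (by norm_num)) (by decide) (bd1 (show (3:Fin 8) ∈ E 5 by decide) (show (1:Fin 8) ∈ E 2 by decide) (by decide)) hvv)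
        · exact Or.inl hvv
      · obtain rfl : v 3 = y := Option.some.inj hg
        by_cases hvv : v 5 = v 3
        · exact Or.inr (key c hc 3 5 0 (memE 3 (by norm_num)) (memE 5 (by norm_num)) (by decide) (bd0 (show (3:Fin 8) ∈ E 5 by decide) (show (3:Fin 8) ∈ E 3 by decide)) hvv)
        · exact Or.inl hvv
      · obtain rfl : v 4 = y := Option.some.inj hg
        by_cases hvv : v 5 = v 4
        · exact Or.inr (key c hc 4 5 0 (memE 4 (by norm_num)) (memE 5 (by norm_num)) (by decide) (bd0 (show (4:Fin 8) ∈ E 5 by decide) (show (4:Fin 8) ∈ E 4 by decide)) hvv)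
        · exact Or.inl hvv
    · -- p = 6
      apply step_true
      intro t ht y hg
      rw [show consAt 6 = consTab.getD 6 [] from rfl] at ht
      rw [show ((List.range 6).map v).reverse = [v 5, v 4, v 3, v 2, v 1, v 0] from by simp [List.range_succ]] at hg
      fin_cases ht
      · obtain rfl : v 0 = y := Option.some.inj hg
        by_cases hvv : v 6 = v 0
        · exact Or.inr (key c hc 0 6 1 (memE 0 (by norm_num)) (memE 6 (by norm_num)) (by decide) (bd1 (show (3:Fin 8) ∈ E 6 by decide) (show (1:Fin 8) ∈ E 0 by decide) (by decide)) hvv)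
        · exact Or.inl hvv
      · obtain rfl : v 1 = y := Option.some.inj hg
        by_cases hvv : v 6 = v 1
        · exact Or.inr (key c hc 1 6 2 (memE 1 (by norm_num)) (memE 6 (by norm_num)) (by decide) (bd2 1 (show (3:Fin 8) ∈ E 6 by decide) (show (0:Fin 8) ∈ E 1 by decide) (by decide) (by decide)) hvv)
        · exact Or.inl hvv
      · obtain rfl : v 2 = y := Option.some.inj hg
        by_cases hvv : v 6 = v 2
        · exact Or.inr (key c hc 2 6 1 (memE 2 (by norm_num)) (memE 6 (by norm_num)) (by decide) (bd1 (show (3:Fin 8) ∈ E 6 by decide) (show (1:Fin 8) ∈ E 2 by decide) (by decide)) hvv)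
        · exact Or.inl hvv
      · obtain rfl : v 3 = y := Option.some.inj hg
        by_cases hvv : v 6 = v 3
        · exact Or.inr (key c hc 3 6 0 (memE 3 (by norm_num)) (memE 6 (by norm_num)) (by decide) (bd0 (show (3:Fin 8) ∈ E 6 by decide) (show (3:Fin 8) ∈ E 3 by decide)) hvv)
        · exact Or.inl hvv
      · obtain rfl : v 4 = y := Option.some.inj hg
        by_cases hvv : v 6 = v 4
        · exact Or.inr (key c hc 4 6 1 (memE 4 (by norm_num)) (memE 6 (by norm_num)) (by decide) (bd1 (show (3:Fin 8) ∈ E 6 by decide) (show (4:Fin 8) ∈ E 4 by decide) (by decide)) hvv)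
        · exact Or.inl hvv
      · obtain rfl : v 5 = y := Option.some.inj hg
        by_cases hvv : v 6 = v 5
        · exact Or.inr (key c hc 5 6 0 (memE 5 (by norm_num)) (memE 6 (by norm_num)) (by decide) (bd0 (show (3:Fin 8) ∈ E 6 by decide) (show (3:Fin 8) ∈ E 5 by decide)) hvv)
        · exact Or.inl hvv
    · -- p = 7
      apply step_true
      intro t ht y hg
      rw [show consAt 7 = consTab.getD 7 [] from rfl] at ht
      rw [show ((List.range 7).map v).reverse = [v 6, v 5, v 4, v 3, v 2, v 1, v 0] from by simp [List.range_succ]] at hg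
      fin_cases ht
      · obtain rfl : v 0 = y := Option.some.inj hg
        by_cases hvv : v 7 = v 0
        · exact Or.inr (key c hc 0 7 2 (memE 0 (by norm_num)) (memE 7 (by norm_num)) (by decide) (bd2 2 (show (4:Fin 8) ∈ E 7 by decide) (show (0:Fin 8) ∈ E 0 by decide) (by decide) (by decide)) hvv)
        · exact Or.inl hvv
      · obtain rfl : v 1 = y := Option.some.inj hg
        by_cases hvv : v 7 = v 1
        · exact Or.inr (key c hc 1 7 1 (memE 1 (by norm_num)) (memE 7 (by norm_num)) (by decide) (bd1 (show (4:Fin 8) ∈ E 7 by decide) (show (2:Fin 8) ∈ E 1 by decide) (by decide)) hvv)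
        · exact Or.inl hvv
      · obtain rfl : v 2 = y := Option.some.inj hg
        by_cases hvv : v 7 = v 2
        · exact Or.inr (key c hc 2 7 1 (memE 2 (by norm_num)) (memE 7 (by norm_num)) (by decide) (bd1 (show (4:Fin 8) ∈ E 7 by decide) (show (2:Fin 8) ∈ E 2 by decide) (by decide)) hvv)
        · exact Or.inl hvv
      · obtain rfl : v 3 = y := Option.some.inj hg
        by_cases hvv : v 7 = v 3
        · exact Or.inr (key c hc 3 7 1 (memE 3 (by norm_num)) (memE 7 (by norm_num)) (by decide) (bd1 (show (4:Fin 8) ∈ E 7 by decide) (show (3:Fin 8) ∈ E 3 by decide) (by decide)) hvv)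
        · exact Or.inl hvv
      · obtain rfl : v 4 = y := Option.some.inj hg
        by_cases hvv : v 7 = v 4
        · exact Or.inr (key c hc 4 7 0 (memE 4 (by norm_num)) (memE 7 (by norm_num)) (by decide) (bd0 (show (4:Fin 8) ∈ E 7 by decide) (show (4:Fin 8) ∈ E 4 by decide)) hvv)
        · exact Or.inl hvv
      · obtain rfl : v 5 = y := Option.some.inj hg
        by_cases hvv : v 7 = v 5
        · exact Or.inr (key c hc 5 7 0 (memE 5 (by norm_num)) (memE 7 (by norm_num)) (by decide) (bd0 (show (4:Fin 8) ∈ E 7 by decide) (show (4:Fin 8) ∈ E 5 by decide)) hvv)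
        · exact Or.inl hvv
      · obtain rfl : v 6 = y := Option.some.inj hg
        by_cases hvv : v 7 = v 6
        · exact Or.inr (key c hc 6 7 1 (memE 6 (by norm_num)) (memE 7 (by norm_num)) (by decide) (bd1 (show (4:Fin 8) ∈ E 7 by decide) (show (3:Fin 8) ∈ E 6 by decide) (by decide)) hvv)
        · exact Or.inl hvv
    · -- p = 8
      apply step_true
      intro t ht y hg
      rw [show consAt 8 = consTab.getD 8 [] from rfl] at ht
      rw [show ((List.range 8).map v).reverse = [v 7, v 6, v 5, v 4, v 3, v 2, v 1, v 0] from by simp [List.range_succ]] at hg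
      fin_cases ht
      · obtain rfl : v 0 = y := Option.some.inj hg
        by_cases hvv : v 8 = v 0
        · exact Or.inr (key c hc 0 8 2 (memE 0 (by norm_num)) (memE 8 (by norm_num)) (by decide) (bd2 3 (show (5:Fin 8) ∈ E 8 by decide) (show (1:Fin 8) ∈ E 0 by decide) (by decide) (by decide)) hvv)
        · exact Or.inl hvv
      · obtain rfl : v 1 = y := Option.some.inj hg
        by_cases hvv : v 8 = v 1
        · exact Or.inr (key c hc 1 8 2 (memE 1 (by norm_num)) (memE 8 (by norm_num)) (by decide) (bd2 4 (show (6:Fin 8) ∈ E 8 by decide) (show (2:Fin 8) ∈ E 1 by decide) (by decide) (by decide)) hvv)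
        · exact Or.inl hvv
      · obtain rfl : v 2 = y := Option.some.inj hg
        by_cases hvv : v 8 = v 2
        · exact Or.inr (key c hc 2 8 2 (memE 2 (by norm_num)) (memE 8 (by norm_num)) (by decide) (bd2 3 (show (5:Fin 8) ∈ E 8 by decide) (show (1:Fin 8) ∈ E 2 by decide) (by decide) (by decide)) hvv)
        · exact Or.inl hvv
      · obtain rfl : v 3 = y := Option.some.inj hg
        by_cases hvv : v 8 = v 3
        · exact Or.inr (key c hc 3 8 1 (memE 3 (by norm_num)) (memE 8 (by norm_num)) (by decide) (bd1 (show (5:Fin 8) ∈ E 8 by decide) (show (3:Fin 8) ∈ E 3 by decide) (by decide)) hvv)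
        · exact Or.inl hvv
      · obtain rfl : v 4 = y := Option.some.inj hg
        by_cases hvv : v 8 = v 4
        · exact Or.inr (key c hc 4 8 1 (memE 4 (by norm_num)) (memE 8 (by norm_num)) (by decide) (bd1 (show (6:Fin 8) ∈ E 8 by decide) (show (4:Fin 8) ∈ E 4 by decide) (by decide)) hvv)
        · exact Or.inl hvv
      · obtain rfl : v 5 = y := Option.some.inj hg
        by_cases hvv : v 8 = v 5
        · exact Or.inr (key c hc 5 8 1 (memE 5 (by norm_num)) (memE 8 (by norm_num)) (by decide) (bd1 (show (5:Fin 8) ∈ E 8 by decide) (show (3:Fin 8) ∈ E 5 by decide) (by decide)) hvv)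
        · exact Or.inl hvv
      · obtain rfl : v 6 = y := Option.some.inj hg
        by_cases hvv : v 8 = v 6
        · exact Or.inr (key c hc 6 8 0 (memE 6 (by norm_num)) (memE 8 (by norm_num)) (by decide) (bd0 (show (5:Fin 8) ∈ E 8 by decide) (show (5:Fin 8) ∈ E 6 by decide)) hvv)
        · exact Or.inl hvv
      · obtain rfl : v 7 = y := Option.some.inj hg
        by_cases hvv : v 8 = v 7
        · exact Or.inr (key c hc 7 8 0 (memE 7 (by norm_num)) (memE 8 (by norm_num)) (by decide) (bd0 (show (6:Fin 8) ∈ E 8 by decide) (show (6:Fin 8) ∈ E 7 by decide)) hvv)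
        · exact Or.inl hvv
    · -- p = 9
      apply step_true
      intro t ht y hg
      rw [show consAt 9 = consTab.getD 9 [] from rfl] at ht
      rw [show ((List.range 9).map v).reverse = [v 8, v 7, v 6, v 5, v 4, v 3, v 2, v 1, v 0] from by simp [List.range_succ]] at hg
      fin_cases ht
      · obtain rfl : v 0 = y := Option.some.inj hg
        by_cases hvv : v 9 = v 0
        · exact Or.inr (key c hc 0 9 2 (memE 0 (by norm_num)) (memE 9 (by norm_num)) (by decide) (bd2 3 (show (5:Fin 8) ∈ E 9 by decide) (show (1:Fin 8) ∈ E 0 by decide) (by decide) (by decide)) hvv)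
        · exact Or.inl hvv
      · obtain rfl : v 2 = y := Option.some.inj hg
        by_cases hvv : v 9 = v 2
        · exact Or.inr (key c hc 2 9 2 (memE 2 (by norm_num)) (memE 9 (by norm_num)) (by decide) (bd2 3 (show (5:Fin 8) ∈ E 9 by decide) (show (1:Fin 8) ∈ E 2 by decide) (by decide) (by decide)) hvv)
        · exact Or.inl hvv
      · obtain rfl : v 3 = y := Option.some.inj hg
        by_cases hvv : v 9 = v 3
        · exact Or.inr (key c hc 3 9 1 (memE 3 (by norm_num)) (memE 9 (by norm_num)) (by decide) (bd1 (show (5:Fin 8) ∈ E 9 by decide) (show (3:Fin 8) ∈ E 3 by decide) (by decide)) hvv)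
        · exact Or.inl hvv
      · obtain rfl : v 4 = y := Option.some.inj hg
        by_cases hvv : v 9 = v 4
        · exact Or.inr (key c hc 4 9 2 (memE 4 (by norm_num)) (memE 9 (by norm_num)) (by decide) (bd2 3 (show (5:Fin 8) ∈ E 9 by decide) (show (4:Fin 8) ∈ E 4 by decide) (by decide) (by decide)) hvv)
        · exact Or.inl hvv
      · obtain rfl : v 5 = y := Option.some.inj hg
        by_cases hvv : v 9 = v 5
        · exact Or.inr (key c hc 5 9 1 (memE 5 (by norm_num)) (memE 9 (by norm_num)) (by decide) (bd1 (show (5:Fin 8) ∈ E 9 by decide) (show (3:Fin 8) ∈ E 5 by decide) (by decide)) hvv)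
        · exact Or.inl hvv
      · obtain rfl : v 6 = y := Option.some.inj hg
        by_cases hvv : v 9 = v 6
        · exact Or.inr (key c hc 6 9 0 (memE 6 (by norm_num)) (memE 9 (by norm_num)) (by decide) (bd0 (show (5:Fin 8) ∈ E 9 by decide) (show (5:Fin 8) ∈ E 6 by decide)) hvv)
        · exact Or.inl hvv
      · obtain rfl : v 7 = y := Option.some.inj hg
        by_cases hvv : v 9 = v 7
        · exact Or.inr (key c hc 7 9 1 (memE 7 (by norm_num)) (memE 9 (by norm_num)) (by decide) (bd1 (show (5:Fin 8) ∈ E 9 by decide) (show (6:Fin 8) ∈ E 7 by decide) (by decide)) hvv)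
        · exact Or.inl hvv
      · obtain rfl : v 8 = y := Option.some.inj hg
        by_cases hvv : v 9 = v 8
        · exact Or.inr (key c hc 8 9 0 (memE 8 (by norm_num)) (memE 9 (by norm_num)) (by decide) (bd0 (show (5:Fin 8) ∈ E 9 by decide) (show (5:Fin 8) ∈ E 8 by decide)) hvv)
        · exact Or.inl hvv
    · -- p = 10
      apply step_true
      intro t ht y hg
      rw [show consAt 10 = consTab.getD 10 [] from rfl] at ht
      rw [show ((List.range 10).map v).reverse = [v 9, v 8, v 7, v 6, v 5, v 4, v 3, v 2, v 1, v 0] from by simp [List.range_succ]] at hg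
      fin_cases ht
      · obtain rfl : v 1 = y := Option.some.inj hg
        by_cases hvv : v 10 = v 1
        · exact Or.inr (key c hc 1 10 2 (memE 1 (by norm_num)) (memE 10 (by norm_num)) (by decide) (bd2 4 (show (6:Fin 8) ∈ E 10 by decide) (show (2:Fin 8) ∈ E 1 by decide) (by decide) (by decide)) hvv)
        · exact Or.inl hvv
      · obtain rfl : v 2 = y := Option.some.inj hg
        by_cases hvv : v 10 = v 2
        · exact Or.inr (key c hc 2 10 2 (memE 2 (by norm_num)) (memE 10 (by norm_num)) (by decide) (bd2 4 (show (6:Fin 8) ∈ E 10 by decide) (show (2:Fin 8) ∈ E 2 by decide) (by decide) (by decide)) hvv)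
        · exact Or.inl hvv
      · obtain rfl : v 3 = y := Option.some.inj hg
        by_cases hvv : v 10 = v 3
        · exact Or.inr (key c hc 3 10 2 (memE 3 (by norm_num)) (memE 10 (by norm_num)) (by decide) (bd2 4 (show (6:Fin 8) ∈ E 10 by decide) (show (3:Fin 8) ∈ E 3 by decide) (by decide) (by decide)) hvv)
        · exact Or.inl hvv
      · obtain rfl : v 4 = y := Option.some.inj hg
        by_cases hvv : v 10 = v 4
        · exact Or.inr (key c hc 4 10 1 (memE 4 (by norm_num)) (memE 10 (by norm_num)) (by decide) (bd1 (show (6:Fin 8) ∈ E 10 by decide) (show (4:Fin 8) ∈ E 4 by decide) (by decide)) hvv)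
        · exact Or.inl hvv
      · obtain rfl : v 5 = y := Option.some.inj hg
        by_cases hvv : v 10 = v 5
        · exact Or.inr (key c hc 5 10 1 (memE 5 (by norm_num)) (memE 10 (by norm_num)) (by decide) (bd1 (show (6:Fin 8) ∈ E 10 by decide) (show (4:Fin 8) ∈ E 5 by decide) (by decide)) hvv)
        · exact Or.inl hvv
      · obtain rfl : v 6 = y := Option.some.inj hg
        by_cases hvv : v 10 = v 6
        · exact Or.inr (key c hc 6 10 1 (memE 6 (by norm_num)) (memE 10 (by norm_num)) (by decide) (bd1 (show (6:Fin 8) ∈ E 10 by decide) (show (5:Fin 8) ∈ E 6 by decide) (by decide)) hvv)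
        · exact Or.inl hvv
      · obtain rfl : v 7 = y := Option.some.inj hg
        by_cases hvv : v 10 = v 7
        · exact Or.inr (key c hc 7 10 0 (memE 7 (by norm_num)) (memE 10 (by norm_num)) (by decide) (bd0 (show (6:Fin 8) ∈ E 10 by decide) (show (6:Fin 8) ∈ E 7 by decide)) hvv)
        · exact Or.inl hvv
      · obtain rfl : v 8 = y := Option.some.inj hg
        by_cases hvv : v 10 = v 8
        · exact Or.inr (key c hc 8 10 0 (memE 8 (by norm_num)) (memE 10 (by norm_num)) (by decide) (bd0 (show (6:Fin 8) ∈ E 10 by decide) (show (6:Fin 8) ∈ E 8 by decide)) hvv)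
        · exact Or.inl hvv
      · obtain rfl : v 9 = y := Option.some.inj hg
        by_cases hvv : v 10 = v 9
        · exact Or.inr (key c hc 9 10 0 (memE 9 (by norm_num)) (memE 10 (by norm_num)) (by decide) (bd0 (show (7:Fin 8) ∈ E 10 by decide) (show (7:Fin 8) ∈ E 9 by decide)) hvv)
        · exact Or.inl hvv
  have h1 : search 11 0 [] = true := search_complete v hv5 hstep 11 0
  have h2 : search 11 0 [] = false := by decide
  exact Bool.false_ne_true (h2.symm.trans h1)
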